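/- arXiv:0903.3261 — 8 statements merged into one kernel-verified Lean document; each statement's English description precedes it below -/
import Mathlib

section
/- Let t ≥ 1 and let B, N, O be real symmetric t×t matrices such that N is positive definite, B and O are positive semidefinite, and B·O = 0. Then the matrices B + N, (B+N)⁻¹ + O, and N⁻¹ + O are invertible, and ((B+N)⁻¹ + O)⁻¹ = (N⁻¹ + O)⁻¹ + B. -/
open Matrix

/-- Key matrix identity (eq. (17)): if `N ≻ 0`, `B, O ⪰ 0` and `B * O = 0`, then
`B + N`, `(B+N)⁻¹ + O` and `N⁻¹ + O` are invertible and
`((B+N)⁻¹ + O)⁻¹ = (N⁻¹ + O)⁻¹ + B`. -/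
theorem stmt_0 (t : ℕ) (ht : 1 ≤ t)
    (B N O : Matrix (Fin t) (Fin t) ℝ)
    (hN : N.PosDef) (hB : B.PosSemidef) (hO : O.PosSemidef)
    (hBO : B * O = 0) :
    IsUnit (B + N) ∧ IsUnit ((B + N)⁻¹ + O) ∧ IsUnit (N⁻¹ + O) ∧
      ((B + N)⁻¹ + O)⁻¹ = (N⁻¹ + O)⁻¹ + B := by
  have hBt : Bᵀ = B := by simpa using hB.isHermitian.eq
  have hOt : Oᵀ = O := by simpa using hO.isHermitian.eq
  have hOB : O * B = 0 := by
    have := congrArg Matrix.transpose hBO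
    simpa [Matrix.transpose_mul, hBt, hOt] using this
  have hBN : (B + N).PosDef := Matrix.PosDef.posSemidef_add hB hN
  have hY : ((B + N)⁻¹ + O).PosDef := hBN.inv.add_posSemidef hO
  have hM : (N⁻¹ + O).PosDef := hN.inv.add_posSemidef hO
  refine ⟨hBN.isUnit, hY.isUnit, hM.isUnit, ?_⟩
  have hMd : IsUnit (N⁻¹ + O).det := (Matrix.isUnit_iff_isUnit_det _).mp hM.isUnit
  have hBNd : IsUnit (B + N).det := (Matrix.isUnit_iff_isUnit_det _).mp hBN.isUnit
  have hNd : IsUnit N.det := (Matrix.isUnit_iff_isUnit_det _).mp hN.isUnit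
  have hMinv : (N⁻¹ + O) * (N⁻¹ + O)⁻¹ = 1 := mul_nonsing_inv _ hMd
  have hBNinv : (B + N)⁻¹ * (B + N) = 1 := nonsing_inv_mul _ hBNd
  have hNinv : N⁻¹ * N = 1 := nonsing_inv_mul _ hNd
  set X := (N⁻¹ + O)⁻¹ + B with hX
  set Y := (B + N)⁻¹ + O with hYdef
  have e1 : (N⁻¹ + O) * X = 1 + N⁻¹ * B := by
    rw [hX, mul_add, hMinv, add_mul, hOB, add_zero]
  have e2 : Y * (B + N) = 1 + O * N := by
    rw [hYdef, add_mul, hBNinv, mul_add, hOB, zero_add]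
  have h1 : (N⁻¹ + O) * (X * Y * (B + N)) = (N⁻¹ + O) * (B + N) := by
    have lhs : (N⁻¹ + O) * (X * Y * (B + N)) = ((N⁻¹ + O) * X) * (Y * (B + N)) := by
      noncomm_ring
    rw [lhs, e1, e2]
    have expand : (1 + N⁻¹ * B) * (1 + O * N) = 1 + N⁻¹ * B + O * N + N⁻¹ * (B * O) * N := by
      noncomm_ring
    rw [expand, hBO]
    have rhs : (N⁻¹ + O) * (B + N) = N⁻¹ * B + N⁻¹ * N + (O * B + O * N) := by
      noncomm_ring
    rw [rhs, hNinv, hOB]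
    noncomm_ring
  have h3 : X * Y * (B + N) = 1 * (B + N) := by
    rw [one_mul]
    exact hM.isUnit.mul_left_cancel h1
  have key : X * Y = 1 := hBN.isUnit.mul_right_cancel h3
  exact inv_eq_left_inv key
end

section
/- Let t ≥ 1 and let B, N, O be real symmetric t×t matrices such that N is positive definite, B and O are positive semidefinite, and B·O = 0. Set N' = (N⁻¹ + O)⁻¹. Then det(B + N') · det(N) = det(B + N) · det(N'). -/
open Matrix

/-- Rate-preservation identity: with `N' = (N⁻¹ + O)⁻¹`,
`det(B + N') * det N = det(B + N) * det N'` when `B * O = 0`. -/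
theorem stmt_1 (t : ℕ) (ht : 1 ≤ t)
    (B N O : Matrix (Fin t) (Fin t) ℝ)
    (hN : N.PosDef) (hB : B.PosSemidef) (hO : O.PosSemidef)
    (hBO : B * O = 0)
    (N' : Matrix (Fin t) (Fin t) ℝ) (hN' : N' = (N⁻¹ + O)⁻¹) :
    (B + N').det * N.det = (B + N).det * N'.det := by
  set M := N⁻¹ + O with hM
  have hMpd : M.PosDef := hN.inv.add_posSemidef hO
  have hMdet : M.det ≠ 0 := hMpd.det_pos.ne'
  have hNdet : N.det ≠ 0 := hN.det_pos.ne'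
  have hMunit : IsUnit M.det := isUnit_iff_ne_zero.mpr hMdet
  have hNunit : IsUnit N.det := isUnit_iff_ne_zero.mpr hNdet
  have hN'M : N' * M = 1 := by rw [hN']; exact nonsing_inv_mul M hMunit
  have key : (B + N') * M = (B + N) * N⁻¹ := by
    rw [add_mul, add_mul, hN'M, hM, mul_add, hBO, add_zero,
      mul_nonsing_inv N hNunit]
  have hdet := congrArg det key
  rw [det_mul, det_mul, det_nonsing_inv, Ring.inverse_eq_inv'] at hdet
  have hdetN' : N'.det = (M.det)⁻¹ := by rw [hN', det_nonsing_inv, Ring.inverse_eq_inv']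
  rw [hdetN']
  field_simp at hdet ⊢
  linarith [hdet]
end

section
/- Let t ≥ 1, let μ > 1 be a real number, and let A, P, Q be real t×t matrices such that P, Q, A, and I − A are all invertible and (I − A)·P = (1/(μ−1))·A·Q. Then (I − A)·P + A·Q is invertible and P⁻¹ + (μ−1)·Q⁻¹ = μ·((I − A)·P + A·Q)⁻¹. -/
/-!
Proportionality collapses the sum to `(μ/(μ-1)) • A Q` and, since `(I - A) P` is a multiple
of `A Q`, gives `P⁻¹ = (μ-1) • (A Q)⁻¹ (I - A) = (μ-1) • ((A Q)⁻¹ - Q⁻¹)`. Both sides of the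
identity are then `(μ-1) • (A Q)⁻¹`.
-/

open Matrix

namespace Matrix

variable {n K : Type*} [Fintype n] [DecidableEq n] [Field K]

lemma isUnit_smul_of_ne_zero {M : Matrix n n K} {c : K} (hc : c ≠ 0) (hM : IsUnit M) :
    IsUnit (c • M) := by
  simpa only [Units.smul_def, Units.val_mk0] using hM.smul (Units.mk0 c hc)

lemma inv_eq_smul_inv_mul_of_mul_eq_smul {X P Y : Matrix n n K} {c : K} (hc : c ≠ 0)
    (hY : IsUnit Y) (h : X * P = c • Y) : P⁻¹ = c⁻¹ • (Y⁻¹ * X) := by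
  apply inv_eq_left_inv
  rw [smul_mul, Matrix.mul_assoc, h, Matrix.mul_smul, smul_smul, inv_mul_cancel₀ hc, one_smul,
    nonsing_inv_mul Y ((isUnit_iff_isUnit_det Y).mp hY)]

end Matrix

theorem stmt_4_general (t : ℕ) (μ : ℝ) (hμ : 1 < μ)
    (A P Q : Matrix (Fin t) (Fin t) ℝ)
    (hQ : IsUnit Q) (hA : IsUnit A)
    (hprop : (1 - A) * P = (1 / (μ - 1)) • (A * Q)) :
    IsUnit ((1 - A) * P + A * Q) ∧
      P⁻¹ + (μ - 1) • Q⁻¹ = μ • ((1 - A) * P + A * Q)⁻¹ := by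
  have hμ1 : μ - 1 ≠ 0 := by linarith
  have hμ0 : μ ≠ 0 := by linarith
  have hc : μ / (μ - 1) ≠ 0 := div_ne_zero hμ0 hμ1
  have hAQ : IsUnit (A * Q) := hA.mul hQ
  have hsum : (1 - A) * P + A * Q = (μ / (μ - 1)) • (A * Q) := by
    rw [hprop, show μ / (μ - 1) = 1 / (μ - 1) + 1 by field_simp; ring, add_smul, one_smul]
  have hP_inv : P⁻¹ = (μ - 1) • ((A * Q)⁻¹ - Q⁻¹) := by
    rw [inv_eq_smul_inv_mul_of_mul_eq_smul (one_div_ne_zero hμ1) hAQ hprop, one_div, inv_inv,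
      Matrix.mul_sub, Matrix.mul_one, Matrix.mul_inv_rev, nonsing_inv_mul_cancel_right A _
        ((isUnit_iff_isUnit_det A).mp hA)]
  have hsum_inv : ((1 - A) * P + A * Q)⁻¹ = (μ / (μ - 1))⁻¹ • (A * Q)⁻¹ := by
    rw [inv_eq_smul_inv_mul_of_mul_eq_smul (X := 1) hc hAQ (by rw [Matrix.one_mul, hsum]),
      Matrix.mul_one]
  refine ⟨hsum ▸ isUnit_smul_of_ne_zero hc hAQ, ?_⟩
  rw [hP_inv, hsum_inv, smul_smul, show μ * (μ / (μ - 1))⁻¹ = μ - 1 by field_simp, smul_sub,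
    sub_add_cancel]

/-- Proportionality property: if `(I - A) * P = (1/(μ-1)) • (A * Q)` with everything
invertible, then `(I - A) * P + A * Q` is invertible and
`P⁻¹ + (μ-1) • Q⁻¹ = μ • ((I - A) * P + A * Q)⁻¹`. -/
theorem stmt_4 (t : ℕ) (ht : 1 ≤ t) (μ : ℝ) (hμ : 1 < μ)
    (A P Q : Matrix (Fin t) (Fin t) ℝ)
    (hP : IsUnit P) (hQ : IsUnit Q) (hA : IsUnit A) (hIA : IsUnit (1 - A))
    (hprop : (1 - A) * P = (1 / (μ - 1)) • (A * Q)) :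
    IsUnit ((1 - A) * P + A * Q) ∧
      P⁻¹ + (μ - 1) • Q⁻¹ = μ • ((1 - A) * P + A * Q)⁻¹ :=
  stmt_4_general t μ hμ A P Q hQ hA hprop
end

section
/- Let t, r ≥ 1, let h ∈ ℝᵗ, let H be a real r×t matrix such that HᵀH is positive definite, and let α > 0. For P ≥ 0 define f(P) = sup over unit vectors ψ ∈ ℝᵗ of (1 + αP·⟨h,ψ⟩²)/(1 + αP·‖Hψ‖²), and define λ_max = sup over unit vectors ψ of ⟨h,ψ⟩²/‖Hψ‖². Then f(P) tends to λ_max as P → ∞. -/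
/-!
For a unit vector `ψ` put `a ψ = ⟨h, ψ⟩²` and `b ψ = ‖Hψ‖²`. Since `b` is bounded below by some
`c > 0` on the (compact) unit sphere and `|b - a|` is bounded by some `A` there,
`(1 + s a)/(1 + s b) - a/b = (b - a)/(b (1 + s b))` is at most `A/(c (1 + s c))` in absolute value,
so `(1 + s a)/(1 + s b) → a/b` uniformly on the sphere as `s = αP → ∞`. Uniform convergence
of functions carries over to their suprema.
-/

open Matrix Filter Topology Set

theorem Set.setOf_exists_and_eq_eq_image {α β : Type*} (p : α → Prop) (F : α → β) :
    {x | ∃ a, p a ∧ x = F a} = F '' {a | p a} := by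
  ext
  simp [eq_comm]

theorem abs_csSup_image_sub_csSup_image_le {ι : Type*} {S : Set ι} {f g : ι → ℝ} {ε : ℝ}
    (hS : S.Nonempty) (hg : BddAbove (g '' S)) (hfg : ∀ x ∈ S, |f x - g x| ≤ ε) :
    |sSup (f '' S) - sSup (g '' S)| ≤ ε := by
  have hf_le : ∀ x ∈ S, f x ≤ sSup (g '' S) + ε := fun x hx => by
    linarith [(abs_le.1 (hfg x hx)).2, le_csSup hg (mem_image_of_mem g hx)]
  have hf : BddAbove (f '' S) := ⟨_, forall_mem_image.2 hf_le⟩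
  have hg_le : ∀ x ∈ S, g x ≤ sSup (f '' S) + ε := fun x hx => by
    linarith [(abs_le.1 (hfg x hx)).1, le_csSup hf (mem_image_of_mem f hx)]
  rw [abs_sub_le_iff]
  constructor
  · linarith [csSup_le (hS.image f) (forall_mem_image.2 hf_le)]
  · linarith [csSup_le (hS.image g) (forall_mem_image.2 hg_le)]

theorem TendstoUniformlyOn.tendsto_csSup_image {ι α : Type*} {l : Filter α} {S : Set ι}
    {F : α → ι → ℝ} {f : ι → ℝ} (hF : TendstoUniformlyOn F f l S) (hS : S.Nonempty)
    (hf : BddAbove (f '' S)) :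
    Tendsto (fun n => sSup (F n '' S)) l (𝓝 (sSup (f '' S))) := by
  rw [Metric.tendsto_nhds]
  intro ε hε
  filter_upwards [Metric.tendstoUniformlyOn_iff.1 hF (ε / 2) (half_pos hε)] with n hn
  rw [Real.dist_eq]
  refine (abs_csSup_image_sub_csSup_image_le hS hf fun x hx => ?_).trans_lt (half_lt_self hε)
  rw [← Real.dist_eq, dist_comm]
  exact (hn x hx).le

theorem TendstoUniformlyOn.comp_tendsto {ι ι' α β : Type*} [UniformSpace β] {p : Filter ι}
    {q : Filter ι'} {S : Set α} {F : ι → α → β} {f : α → β} (hF : TendstoUniformlyOn F f p S)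
    {φ : ι' → ι} (hφ : Tendsto φ q p) :
    TendstoUniformlyOn (fun n => F (φ n)) f q S :=
  fun u hu => hφ.eventually (hF u hu)

theorem one_add_mul_div_one_add_mul_sub_div {a b s : ℝ} (hb : b ≠ 0) (hsb : 1 + s * b ≠ 0) :
    (1 + s * a) / (1 + s * b) - a / b = (b - a) / (b * (1 + s * b)) := by
  field_simp
  ring

theorem abs_one_add_mul_div_one_add_mul_sub_div_le {a b c A s : ℝ} (hc : 0 < c) (hcb : c ≤ b)
    (hA : |b - a| ≤ A) (hs : 0 ≤ s) :
    |(1 + s * a) / (1 + s * b) - a / b| ≤ A / (c * (1 + s * c)) := by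
  have hb : 0 < b := hc.trans_le hcb
  have hsc : 1 + s * c ≤ 1 + s * b := by gcongr
  have hsc_pos : 0 < 1 + s * c := by positivity
  rw [one_add_mul_div_one_add_mul_sub_div hb.ne' (hsc_pos.trans_le hsc).ne', abs_div,
    abs_of_pos (a := b * (1 + s * b)) (by positivity)]
  exact div_le_div₀ ((abs_nonneg _).trans hA) hA (by positivity)
    (mul_le_mul hcb hsc hsc_pos.le hb.le)

theorem tendstoUniformlyOn_one_add_mul_div {ι : Type*} {S : Set ι} {a b : ι → ℝ} {c A : ℝ}
    (hc : 0 < c) (hcb : ∀ x ∈ S, c ≤ b x) (hA : ∀ x ∈ S, |b x - a x| ≤ A) :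
    TendstoUniformlyOn (fun s x => (1 + s * a x) / (1 + s * b x)) (fun x => a x / b x) atTop S := by
  have hbound : Tendsto (fun s => A / (c * (1 + s * c))) atTop (𝓝 0) :=
    tendsto_const_nhds.div_atTop <| Tendsto.const_mul_atTop hc <|
      tendsto_atTop_add_const_left _ 1 (tendsto_id.atTop_mul_const hc)
  rw [Metric.tendstoUniformlyOn_iff]
  intro ε hε
  filter_upwards [eventually_ge_atTop 0, hbound.eventually (gt_mem_nhds hε)] with s hs hsε x hx
  rw [dist_comm, Real.dist_eq]
  exact (abs_one_add_mul_div_one_add_mul_sub_div_le hc (hcb x hx) (hA x hx) hs).trans_lt hsε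

theorem IsCompact.tendstoUniformlyOn_one_add_mul_div {X : Type*} [TopologicalSpace X]
    {S : Set X} (hS : IsCompact S) {a b : X → ℝ} (ha : ContinuousOn a S) (hb : ContinuousOn b S)
    (hb_pos : ∀ x ∈ S, 0 < b x) :
    TendstoUniformlyOn (fun s x => (1 + s * a x) / (1 + s * b x)) (fun x => a x / b x) atTop S := by
  rcases S.eq_empty_or_nonempty with rfl | hne
  · exact tendstoUniformlyOn_empty
  obtain ⟨x₀, hx₀, hmin⟩ := hS.exists_isMinOn hne hb
  obtain ⟨A, hA⟩ := hS.bddAbove_image (f := fun x => |b x - a x|) (hb.sub ha).abs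
  exact _root_.tendstoUniformlyOn_one_add_mul_div (hb_pos x₀ hx₀) (fun x hx => hmin hx)
    fun x hx => hA (mem_image_of_mem _ hx)

theorem Matrix.isCompact_setOf_dotProduct_self_eq_one {ι : Type*} [Fintype ι] :
    IsCompact {ψ : ι → ℝ | ψ ⬝ᵥ ψ = 1} := by
  refine Metric.isCompact_of_isClosed_isBounded
    (isClosed_eq (by fun_prop) continuous_const)
    ((Metric.isBounded_closedBall (x := 0) (r := 1)).subset fun ψ hψ => ?_)
  rw [Metric.mem_closedBall, dist_zero_right, pi_norm_le_iff_of_nonneg zero_le_one]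
  intro i
  rw [Real.norm_eq_abs, abs_le_one_iff_mul_self_le_one, ← show ψ ⬝ᵥ ψ = 1 from hψ]
  exact Finset.single_le_sum (fun j _ => mul_self_nonneg (ψ j)) (Finset.mem_univ i)

theorem Matrix.dotProduct_mulVec_self_pos {m n : Type*} [Fintype m] [Fintype n]
    {H : Matrix m n ℝ} (hH : (Hᵀ * H).PosDef) {x : n → ℝ} (hx : x ≠ 0) :
    0 < H *ᵥ x ⬝ᵥ H *ᵥ x := by
  simpa [star_trivial, ← mulVec_mulVec, dotProduct_mulVec, vecMul_transpose] using
    hH.dotProduct_mulVec_pos hx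

theorem stmt_8_general (t r : ℕ) (ht : 1 ≤ t)
    (h : Fin t → ℝ) (H : Matrix (Fin r) (Fin t) ℝ)
    (hH : (Hᵀ * H).PosDef) (α : ℝ) (hα : 0 < α)
    (f : ℝ → ℝ)
    (hf : ∀ P : ℝ, f P = sSup {x : ℝ | ∃ ψ : Fin t → ℝ, ψ ⬝ᵥ ψ = 1 ∧
      x = (1 + α * P * (h ⬝ᵥ ψ) ^ 2) / (1 + α * P * (H.mulVec ψ ⬝ᵥ H.mulVec ψ))})
    (lmax : ℝ)
    (hlmax : lmax = sSup {x : ℝ | ∃ ψ : Fin t → ℝ, ψ ⬝ᵥ ψ = 1 ∧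
      x = (h ⬝ᵥ ψ) ^ 2 / (H.mulVec ψ ⬝ᵥ H.mulVec ψ)}) :
    Tendsto f atTop (nhds lmax) := by
  set S := {ψ : Fin t → ℝ | ψ ⬝ᵥ ψ = 1}
  have hS : IsCompact S := isCompact_setOf_dotProduct_self_eq_one
  have hS_ne : S.Nonempty := ⟨Pi.single ⟨0, ht⟩ 1, by simp [S]⟩
  have hb_pos : ∀ ψ ∈ S, 0 < H *ᵥ ψ ⬝ᵥ H *ᵥ ψ := fun ψ hψ =>
    dotProduct_mulVec_self_pos hH fun h0 => by simp [S, h0] at hψ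
  have ha : Continuous fun ψ : Fin t → ℝ => (h ⬝ᵥ ψ) ^ 2 := by fun_prop
  have hb : Continuous fun ψ : Fin t → ℝ => H *ᵥ ψ ⬝ᵥ H *ᵥ ψ := by fun_prop
  have hconv := (hS.tendstoUniformlyOn_one_add_mul_div ha.continuousOn hb.continuousOn
    hb_pos).comp_tendsto (tendsto_id.const_mul_atTop hα)
  have hbdd := hS.bddAbove_image (ha.continuousOn.div hb.continuousOn fun ψ hψ => (hb_pos ψ hψ).ne')
  rw [show f = fun P => _ from funext hf, hlmax]
  simp only [setOf_exists_and_eq_eq_image]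
  exact hconv.tendsto_csSup_image hS_ne hbdd

/-- High-SNR limit of the largest generalized eigenvalue of the pencil
`(I + αP h hᵀ, I + αP HᵀH)`: as `P → ∞` it tends to the largest generalized
eigenvalue of `(h hᵀ, HᵀH)`. -/
theorem stmt_8 (t r : ℕ) (ht : 1 ≤ t) (hr : 1 ≤ r)
    (h : Fin t → ℝ) (H : Matrix (Fin r) (Fin t) ℝ)
    (hH : (Hᵀ * H).PosDef) (α : ℝ) (hα : 0 < α)
    (f : ℝ → ℝ)
    (hf : ∀ P : ℝ, f P = sSup {x : ℝ | ∃ ψ : Fin t → ℝ, ψ ⬝ᵥ ψ = 1 ∧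
      x = (1 + α * P * (h ⬝ᵥ ψ) ^ 2) / (1 + α * P * (H.mulVec ψ ⬝ᵥ H.mulVec ψ))})
    (lmax : ℝ)
    (hlmax : lmax = sSup {x : ℝ | ∃ ψ : Fin t → ℝ, ψ ⬝ᵥ ψ = 1 ∧
      x = (h ⬝ᵥ ψ) ^ 2 / (H.mulVec ψ ⬝ᵥ H.mulVec ψ)}) :
    Tendsto f atTop (nhds lmax) :=
  stmt_8_general t r ht h H hH α hα f hf lmax hlmax
end

section
/- Let t, r ≥ 1, let h ∈ ℝᵗ, let H be a real r×t matrix such that HᵀH is positive definite, and let α > 0. For P ≥ 0 define f(P) = sup over unit vectors ψ ∈ ℝᵗ of (1 + αP·⟨h,ψ⟩²)/(1 + αP·‖Hψ‖²). If 0 ≤ P₁ ≤ P₂ and f(P₁) > 1, then f(P₁) ≤ f(P₂). -/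
open Matrix

private lemma ratio_mono9 {a b α P₁ P₂ : ℝ} (ha : 0 ≤ a) (hb : 0 ≤ b)
    (hα : 0 < α) (hP₁ : 0 < P₁) (hP : P₁ ≤ P₂)
    (hgt : 1 < (1 + α * P₁ * a) / (1 + α * P₁ * b)) :
    (1 + α * P₁ * a) / (1 + α * P₁ * b) ≤ (1 + α * P₂ * a) / (1 + α * P₂ * b) := by
  have hd₁ : (0:ℝ) < 1 + α * P₁ * b := by positivity
  have hP₂ : 0 < P₂ := lt_of_lt_of_le hP₁ hP
  have hd₂ : (0:ℝ) < 1 + α * P₂ * b := by positivity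
  have hba : b < a := by
    rw [lt_div_iff₀ hd₁] at hgt
    exact (mul_lt_mul_iff_right₀ (mul_pos hα hP₁)).mp (by linarith)
  rw [div_le_div_iff₀ hd₁ hd₂]
  nlinarith [mul_nonneg hα.le (sub_nonneg.mpr hP)]

/-- Monotonicity in the power `P` of the largest generalized eigenvalue of the pencil
`(I + αP h hᵀ, I + αP HᵀH)`, in the regime where it exceeds 1. -/
theorem stmt_9 (t r : ℕ) (ht : 1 ≤ t) (hr : 1 ≤ r)
    (h : Fin t → ℝ) (H : Matrix (Fin r) (Fin t) ℝ)
    (hH : (Hᵀ * H).PosDef) (α : ℝ) (hα : 0 < α)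
    (f : ℝ → ℝ)
    (hf : ∀ P : ℝ, f P = sSup {x : ℝ | ∃ ψ : Fin t → ℝ, ψ ⬝ᵥ ψ = 1 ∧
      x = (1 + α * P * (h ⬝ᵥ ψ) ^ 2) / (1 + α * P * (H.mulVec ψ ⬝ᵥ H.mulVec ψ))})
    (P₁ P₂ : ℝ) (hP₁ : 0 ≤ P₁) (hP₁₂ : P₁ ≤ P₂) (h1 : 1 < f P₁) :
    f P₁ ≤ f P₂ := by
  have hself : ∀ (n : ℕ) (ψ : Fin n → ℝ), 0 ≤ ψ ⬝ᵥ ψ := fun n ψ =>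
    Finset.sum_nonneg fun i _ => mul_self_nonneg _
  -- case P₁ = 0 is impossible
  rcases eq_or_lt_of_le hP₁ with h0 | hP₁pos
  · exfalso
    have hle : f P₁ ≤ 1 := by
      rw [hf P₁]
      apply Real.sSup_le _ zero_le_one
      rintro x ⟨ψ, hψ, rfl⟩
      rw [← h0]
      simp
    linarith
  have hP₂pos : 0 < P₂ := lt_of_lt_of_le hP₁pos hP₁₂
  -- key: for unit ψ, the value at P₂ dominates the value at P₁ when the latter exceeds 1,
  -- and is always bounded above
  have hmem : ∀ (P : ℝ) (ψ : Fin t → ℝ), ψ ⬝ᵥ ψ = 1 →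
      (1 + α * P * (h ⬝ᵥ ψ) ^ 2) / (1 + α * P * (H.mulVec ψ ⬝ᵥ H.mulVec ψ)) ∈
      {x : ℝ | ∃ ψ : Fin t → ℝ, ψ ⬝ᵥ ψ = 1 ∧
        x = (1 + α * P * (h ⬝ᵥ ψ) ^ 2) / (1 + α * P * (H.mulVec ψ ⬝ᵥ H.mulVec ψ))} :=
    fun P ψ hψ => ⟨ψ, hψ, rfl⟩
  -- bounded above
  have hbdd : BddAbove {x : ℝ | ∃ ψ : Fin t → ℝ, ψ ⬝ᵥ ψ = 1 ∧
      x = (1 + α * P₂ * (h ⬝ᵥ ψ) ^ 2) / (1 + α * P₂ * (H.mulVec ψ ⬝ᵥ H.mulVec ψ))} := by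
    refine ⟨1 + α * P₂ * (h ⬝ᵥ h), ?_⟩
    rintro x ⟨ψ, hψ, rfl⟩
    have hcs : (h ⬝ᵥ ψ) ^ 2 ≤ h ⬝ᵥ h := by
      have := Finset.sum_mul_sq_le_sq_mul_sq Finset.univ h ψ
      have h1 : (∑ i, ψ i ^ 2) = 1 := by
        simpa [dotProduct, pow_two] using hψ
      have h2 : (∑ i, h i ^ 2) = h ⬝ᵥ h := by
        simp [dotProduct, pow_two]
      simpa [dotProduct, h1, h2] using this
    have hden : (1:ℝ) ≤ 1 + α * P₂ * (H.mulVec ψ ⬝ᵥ H.mulVec ψ) := by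
      have h0 := mul_nonneg (le_of_lt (mul_pos hα hP₂pos)) (hself r (H.mulVec ψ))
      linarith
    have hnum : (0:ℝ) ≤ 1 + α * P₂ * (h ⬝ᵥ ψ) ^ 2 := by positivity
    calc (1 + α * P₂ * (h ⬝ᵥ ψ) ^ 2) / (1 + α * P₂ * (H.mulVec ψ ⬝ᵥ H.mulVec ψ))
        ≤ 1 + α * P₂ * (h ⬝ᵥ ψ) ^ 2 := div_le_self hnum hden
      _ ≤ 1 + α * P₂ * (h ⬝ᵥ h) := by
          have := mul_le_mul_of_nonneg_left hcs (le_of_lt (mul_pos hα hP₂pos))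
          linarith
  -- there is an element of S₁ exceeding 1
  have hex : ∃ ψ₀ : Fin t → ℝ, ψ₀ ⬝ᵥ ψ₀ = 1 ∧
      1 < (1 + α * P₁ * (h ⬝ᵥ ψ₀) ^ 2) / (1 + α * P₁ * (H.mulVec ψ₀ ⬝ᵥ H.mulVec ψ₀)) := by
    by_contra hcon
    push_neg at hcon
    have hle : f P₁ ≤ 1 := by
      rw [hf P₁]
      apply Real.sSup_le _ zero_le_one
      rintro x ⟨ψ, hψ, rfl⟩
      exact hcon ψ hψ
    linarith
  obtain ⟨ψ₀, hψ₀, hgt₀⟩ := hex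
  have hmono0 := ratio_mono9 (sq_nonneg (h ⬝ᵥ ψ₀)) (hself r (H.mulVec ψ₀)) hα hP₁pos hP₁₂ hgt₀
  have hS2 : 1 < sSup {x : ℝ | ∃ ψ : Fin t → ℝ, ψ ⬝ᵥ ψ = 1 ∧
      x = (1 + α * P₂ * (h ⬝ᵥ ψ) ^ 2) / (1 + α * P₂ * (H.mulVec ψ ⬝ᵥ H.mulVec ψ))} :=
    lt_of_lt_of_le (lt_of_lt_of_le hgt₀ hmono0) (le_csSup hbdd (hmem P₂ ψ₀ hψ₀))
  rw [hf P₁, hf P₂]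
  apply Real.sSup_le _ (by linarith : (0:ℝ) ≤ sSup _)
  rintro x ⟨ψ, hψ, rfl⟩
  by_cases hx : 1 < (1 + α * P₁ * (h ⬝ᵥ ψ) ^ 2) / (1 + α * P₁ * (H.mulVec ψ ⬝ᵥ H.mulVec ψ))
  · exact le_trans
      (ratio_mono9 (sq_nonneg (h ⬝ᵥ ψ)) (hself r (H.mulVec ψ)) hα hP₁pos hP₁₂ hx)
      (le_csSup hbdd (hmem P₂ ψ hψ))
  · push_neg at hx
    linarith
end

section
/- Let t ≥ 1 and μ ≥ 1. Let N₁, N₂, N₃ be real symmetric positive definite t×t matrices and B₁, O₁, O₂ real symmetric positive semidefinite t×t matrices with B₁·O₁ = 0, and suppose the KKT stationarity condition (B₁+N₁)⁻¹ + (μ−1)(B₁+N₃)⁻¹ + O₁ = μ(B₁+N₂)⁻¹ + O₂ holds. Define N₁' = (N₁⁻¹ + O₁)⁻¹ and N₂' = ((B₁+N₂)⁻¹ + (1/μ)O₂)⁻¹ − B₁. Then B₁ + N₁' and B₁ + N₂' are invertible and (B₁+N₁')⁻¹ + (μ−1)(B₁+N₃)⁻¹ = μ(B₁+N₂')⁻¹.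 -/
/-!
The enhanced noises are chosen so that the multipliers are absorbed into the inverses. For `N₁'`
this is the identity `(B + (N⁻¹ + O)⁻¹)⁻¹ = (B + N)⁻¹ + O`, valid as soon as `B O = O B = 0`
(which follows from `B₁ O₁ = 0` by symmetry); for `N₂'` it is immediate, since
`B₁ + N₂' = ((B₁ + N₂)⁻¹ + μ⁻¹ O₂)⁻¹`. Substituting both into the KKT condition gives the claim.
-/

open Matrix

theorem Matrix.inv_add_inv_add_inv_of_mul_eq_zero {n R : Type*} [Fintype n] [DecidableEq n]
    [CommRing R] {B N O : Matrix n n R} (hBO : B * O = 0) (hOB : O * B = 0)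
    (hN : IsUnit N.det) (hS : IsUnit (N⁻¹ + O).det) (hBN : IsUnit (B + N).det) :
    (B + (N⁻¹ + O)⁻¹)⁻¹ = (B + N)⁻¹ + O := by
  set S := N⁻¹ + O
  -- `S` agrees with `N⁻¹` on the range of `B`, since `O B = 0`.
  have hSB : S⁻¹ * N⁻¹ * B = B := by
    rw [Matrix.mul_assoc, show N⁻¹ * B = S * B by rw [add_mul, hOB, add_zero],
      nonsing_inv_mul_cancel_left _ _ hS]
  have hfactor : B + S⁻¹ = S⁻¹ * N⁻¹ * (B + N) := by
    rw [mul_add, hSB, nonsing_inv_mul_cancel_right _ _ hN]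
  refine inv_eq_right_inv ?_
  calc (B + S⁻¹) * ((B + N)⁻¹ + O)
      = S⁻¹ * N⁻¹ + S⁻¹ * N⁻¹ * (N * O) := by
        rw [hfactor, mul_add, mul_nonsing_inv_cancel_right _ _ hBN, Matrix.mul_assoc _ (B + N),
          add_mul, hBO, zero_add]
    _ = S⁻¹ * S := by
        rw [Matrix.mul_assoc S⁻¹ N⁻¹, nonsing_inv_mul_cancel_left _ _ hN, ← mul_add]
    _ = 1 := nonsing_inv_mul _ hS

theorem Matrix.IsHermitian.mul_eq_zero_symm {n R : Type*} [Fintype n] [CommSemiring R]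
    [StarRing R] {A B : Matrix n n R} (hA : A.IsHermitian) (hB : B.IsHermitian)
    (hAB : A * B = 0) : B * A = 0 := by
  simpa [conjTranspose_mul, hA.eq, hB.eq] using congrArg (fun M : Matrix n n R => Mᴴ) hAB

theorem stmt_12_general (t : ℕ) (μ : ℝ) (hμ : 1 ≤ μ)
    (N₁ N₂ N₃ B₁ O₁ O₂ : Matrix (Fin t) (Fin t) ℝ)
    (hN₁ : N₁.PosDef) (hN₂ : N₂.PosDef)
    (hB₁ : B₁.PosSemidef) (hO₁ : O₁.PosSemidef) (hO₂ : O₂.PosSemidef)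
    (hBO₁ : B₁ * O₁ = 0)
    (hKKT : (B₁ + N₁)⁻¹ + (μ - 1) • (B₁ + N₃)⁻¹ + O₁
              = μ • (B₁ + N₂)⁻¹ + O₂)
    (N₁' N₂' : Matrix (Fin t) (Fin t) ℝ)
    (hN₁' : N₁' = (N₁⁻¹ + O₁)⁻¹)
    (hN₂' : N₂' = ((B₁ + N₂)⁻¹ + (1 / μ) • O₂)⁻¹ - B₁) :
    IsUnit (B₁ + N₁') ∧ IsUnit (B₁ + N₂') ∧
      (B₁ + N₁')⁻¹ + (μ - 1) • (B₁ + N₃)⁻¹ = μ • (B₁ + N₂')⁻¹ := by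
  have hμ0 : μ ≠ 0 := (zero_lt_one.trans_le hμ).ne'
  have hS : (N₁⁻¹ + O₁).PosDef := hN₁.inv.add_posSemidef hO₁
  have hT : ((B₁ + N₂)⁻¹ + (1 / μ) • O₂).PosDef :=
    (PosDef.posSemidef_add hB₁ hN₂).inv.add_posSemidef (hO₂.smul (by positivity))
  have hBN₂' : B₁ + N₂' = ((B₁ + N₂)⁻¹ + (1 / μ) • O₂)⁻¹ := by rw [hN₂', add_sub_cancel]
  have hinv₁ : (B₁ + N₁')⁻¹ = (B₁ + N₁)⁻¹ + O₁ := by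
    rw [hN₁']
    exact inv_add_inv_add_inv_of_mul_eq_zero hBO₁ (hB₁.1.mul_eq_zero_symm hO₁.1 hBO₁)
      hN₁.det_pos.ne'.isUnit hS.det_pos.ne'.isUnit
      (PosDef.posSemidef_add hB₁ hN₁).det_pos.ne'.isUnit
  refine ⟨hN₁' ▸ (PosDef.posSemidef_add hB₁ hS.inv).isUnit, hBN₂' ▸ hT.inv.isUnit, ?_⟩
  rw [hinv₁, hBN₂', nonsing_inv_nonsing_inv _ hT.det_pos.ne'.isUnit, smul_add, smul_smul,
    mul_one_div_cancel hμ0, one_smul, add_right_comm]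
  exact hKKT

/-- Transfer of the KKT stationarity condition to the enhanced channel:
with `N₁' = (N₁⁻¹ + O₁)⁻¹` and `N₂' = ((B₁+N₂)⁻¹ + (1/μ)O₂)⁻¹ - B₁`, the
original KKT condition implies
`(B₁+N₁')⁻¹ + (μ-1)(B₁+N₃)⁻¹ = μ(B₁+N₂')⁻¹`. -/
theorem stmt_12 (t : ℕ) (ht : 1 ≤ t) (μ : ℝ) (hμ : 1 ≤ μ)
    (N₁ N₂ N₃ B₁ O₁ O₂ : Matrix (Fin t) (Fin t) ℝ)
    (hN₁ : N₁.PosDef) (hN₂ : N₂.PosDef) (hN₃ : N₃.PosDef)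
    (hB₁ : B₁.PosSemidef) (hO₁ : O₁.PosSemidef) (hO₂ : O₂.PosSemidef)
    (hBO₁ : B₁ * O₁ = 0)
    (hKKT : (B₁ + N₁)⁻¹ + (μ - 1) • (B₁ + N₃)⁻¹ + O₁
              = μ • (B₁ + N₂)⁻¹ + O₂)
    (N₁' N₂' : Matrix (Fin t) (Fin t) ℝ)
    (hN₁' : N₁' = (N₁⁻¹ + O₁)⁻¹)
    (hN₂' : N₂' = ((B₁ + N₂)⁻¹ + (1 / μ) • O₂)⁻¹ - B₁) :
    IsUnit (B₁ + N₁') ∧ IsUnit (B₁ + N₂') ∧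
      (B₁ + N₁')⁻¹ + (μ - 1) • (B₁ + N₃)⁻¹ = μ • (B₁ + N₂')⁻¹ :=
  stmt_12_general t μ hμ N₁ N₂ N₃ B₁ O₁ O₂ hN₁ hN₂ hB₁ hO₁ hO₂ hBO₁ hKKT N₁' N₂' hN₁' hN₂'
end

section
/- Let t ≥ 1 and μ ≥ 1. Let N₁, N₂ be real symmetric positive definite t×t matrices and B₁, B₂, O₁, O₂ real symmetric positive semidefinite t×t matrices with B₁·O₁ = 0 and B₂·O₂ = 0. Define the enhanced noise covariances N₁' = (N₁⁻¹ + O₁)⁻¹ and N₂' = ((B₁+N₂)⁻¹ + (1/μ)O₂)⁻¹ − B₁. Then: (1) N₁ − N₁' and N₂ − N₂' are positive semidefinite (enhancement); and (2) det(B₁ + N₁')·det(N₁) = det(B₁ + N₁)·det(N₁') and det(B₁ + B₂ + N₂')·det(B₁ + N₂) = det(B₁ + B₂ + N₂)·det(B₁ + N₂') (rate preservation). -/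
/-!
Both `N₁'` and `B₁ + N₂'` have the form `A' = (A⁻¹ + O)⁻¹` with `O ⪰ 0`, where `A = N₁` resp.
`A = B₁ + N₂`. Matrix inversion is antitone in the Loewner order, so `A' ⪯ A`. The layer `B`
sitting above the enhanced receiver satisfies `B * O = 0`, hence `(B + A') (A⁻¹ + O) A = B + A`,
which is exactly the preservation of `det (B + A') / det A'`.
-/

open Matrix

namespace Matrix

variable {n K : Type*} [Fintype n] [DecidableEq n] [Field K]

section Loewner

variable [PartialOrder K] [StarRing K] [StarOrderedRing K]

/-- `Y - X` and `X⁻¹ - Y⁻¹` are the two Schur complements of `fromBlocks Y 1 1 X⁻¹`. -/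
theorem PosDef.posSemidef_inv_sub_inv {X Y : Matrix n n K} (hX : X.PosDef)
    (hXY : (Y - X).PosSemidef) : (X⁻¹ - Y⁻¹).PosSemidef := by
  have hY : Y.PosDef := sub_add_cancel Y X ▸ PosDef.posSemidef_add hXY hX
  let _ := hX.isUnit.invertible
  let _ := hY.isUnit.invertible
  have h₂₂ := PosDef.fromBlocks₂₂ Y (1 : Matrix n n K) hX.inv
  have h₁₁ := PosDef.fromBlocks₁₁ (1 : Matrix n n K) X⁻¹ hY
  rw [inv_inv_of_invertible] at h₂₂
  simp only [conjTranspose_one, one_mul, mul_one] at h₂₂ h₁₁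
  exact h₁₁.mp (h₂₂.mpr hXY)

theorem PosDef.posSemidef_sub_inv_inv_add {A O : Matrix n n K} (hA : A.PosDef)
    (hO : O.PosSemidef) : (A - (A⁻¹ + O)⁻¹).PosSemidef := by
  let _ := hA.isUnit.invertible
  simpa only [inv_inv_of_invertible] using
    hA.inv.posSemidef_inv_sub_inv (by simpa only [add_sub_cancel_left] using hO)

end Loewner

theorem det_add_inv_inv_add_mul_det {A B O : Matrix n n K} (hA : IsUnit A)
    (hS : IsUnit (A⁻¹ + O)) (hBO : B * O = 0) :
    (B + (A⁻¹ + O)⁻¹).det * A.det = (B + A).det * (A⁻¹ + O)⁻¹.det := by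
  have hSdet : (A⁻¹ + O).det ≠ 0 := ((isUnit_iff_isUnit_det _).mp hS).ne_zero
  have hfactor : (B + (A⁻¹ + O)⁻¹) * (A⁻¹ + O) * A = B + A := by
    rw [add_mul, nonsing_inv_mul _ ((isUnit_iff_isUnit_det _).mp hS), mul_add, hBO, add_zero,
      add_mul, one_mul, mul_assoc, nonsing_inv_mul _ ((isUnit_iff_isUnit_det _).mp hA), mul_one]
  rw [← hfactor, det_mul, det_mul, det_nonsing_inv, Ring.inverse_eq_inv']
  field_simp

end Matrix

theorem stmt_13_general (t : ℕ) (μ : ℝ) (hμ : 1 ≤ μ)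
    (N₁ N₂ B₁ B₂ O₁ O₂ : Matrix (Fin t) (Fin t) ℝ)
    (hN₁ : N₁.PosDef) (hN₂ : N₂.PosDef)
    (hB₁ : B₁.PosSemidef)
    (hO₁ : O₁.PosSemidef) (hO₂ : O₂.PosSemidef)
    (hBO₁ : B₁ * O₁ = 0) (hBO₂ : B₂ * O₂ = 0)
    (N₁' N₂' : Matrix (Fin t) (Fin t) ℝ)
    (hN₁' : N₁' = (N₁⁻¹ + O₁)⁻¹)
    (hN₂' : N₂' = ((B₁ + N₂)⁻¹ + (1 / μ) • O₂)⁻¹ - B₁) :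
    (N₁ - N₁').PosSemidef ∧ (N₂ - N₂').PosSemidef ∧
      (B₁ + N₁').det * N₁.det = (B₁ + N₁).det * N₁'.det ∧
      (B₁ + B₂ + N₂').det * (B₁ + N₂).det
        = (B₁ + B₂ + N₂).det * (B₁ + N₂').det := by
  subst hN₁' hN₂'
  set S₂ := (B₁ + N₂)⁻¹ + (1 / μ) • O₂
  have hA₂ : (B₁ + N₂).PosDef := PosDef.posSemidef_add hB₁ hN₂
  have hO₂' : ((1 / μ) • O₂).PosSemidef := hO₂.smul (by positivity)
  have hBO₂' : B₂ * ((1 / μ) • O₂) = 0 := by rw [Matrix.mul_smul, hBO₂, smul_zero]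
  refine ⟨hN₁.posSemidef_sub_inv_inv_add hO₁, ?_,
    det_add_inv_inv_add_mul_det hN₁.isUnit (hN₁.inv.add_posSemidef hO₁).isUnit hBO₁, ?_⟩
  · rw [show N₂ - (S₂⁻¹ - B₁) = B₁ + N₂ - S₂⁻¹ by abel]
    exact hA₂.posSemidef_sub_inv_inv_add hO₂'
  · rw [show B₁ + B₂ + (S₂⁻¹ - B₁) = B₂ + S₂⁻¹ by abel, show B₁ + (S₂⁻¹ - B₁) = S₂⁻¹ by abel,
      show B₁ + B₂ + N₂ = B₂ + (B₁ + N₂) by abel]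
    exact det_add_inv_inv_add_mul_det hA₂.isUnit (hA₂.inv.add_posSemidef hO₂').isUnit hBO₂'

/-- Enhancement and rate preservation (Theorem 2 of the paper): with
`N₁' = (N₁⁻¹ + O₁)⁻¹` and `N₂' = ((B₁+N₂)⁻¹ + (1/μ)O₂)⁻¹ - B₁`, one has
`N₁' ⪯ N₁`, `N₂' ⪯ N₂`, and the Gaussian secrecy-rate determinant ratios are
preserved. -/
theorem stmt_13 (t : ℕ) (ht : 1 ≤ t) (μ : ℝ) (hμ : 1 ≤ μ)
    (N₁ N₂ B₁ B₂ O₁ O₂ : Matrix (Fin t) (Fin t) ℝ)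
    (hN₁ : N₁.PosDef) (hN₂ : N₂.PosDef)
    (hB₁ : B₁.PosSemidef) (hB₂ : B₂.PosSemidef)
    (hO₁ : O₁.PosSemidef) (hO₂ : O₂.PosSemidef)
    (hBO₁ : B₁ * O₁ = 0) (hBO₂ : B₂ * O₂ = 0)
    (N₁' N₂' : Matrix (Fin t) (Fin t) ℝ)
    (hN₁' : N₁' = (N₁⁻¹ + O₁)⁻¹)
    (hN₂' : N₂' = ((B₁ + N₂)⁻¹ + (1 / μ) • O₂)⁻¹ - B₁) :
    (N₁ - N₁').PosSemidef ∧ (N₂ - N₂').PosSemidef ∧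
      (B₁ + N₁').det * N₁.det = (B₁ + N₁).det * N₁'.det ∧
      (B₁ + B₂ + N₂').det * (B₁ + N₂).det
        = (B₁ + B₂ + N₂).det * (B₁ + N₂').det :=
  stmt_13_general t μ hμ N₁ N₂ B₁ B₂ O₁ O₂ hN₁ hN₂ hB₁ hO₁ hO₂ hBO₁ hBO₂ N₁' N₂' hN₁' hN₂'
end

section
/- Let t ≥ 1, let B₁ and N₁ be real symmetric positive definite t×t matrices and B₂ a real symmetric positive semidefinite t×t matrix. For a real t×t matrix C define M(C) = B₁ + C·B₂·Cᵀ − (B₁ + C·B₂)·(B₁ + B₂ + N₁)⁻¹·(B₁ + C·B₂)ᵀ. Then for every real t×t matrix C one has det(M(C)) ≥ det(B₁)·det(N₁)/det(B₁+N₁), and equality holds for C* = B₁·(B₁+N₁)⁻¹, for which M(C*) = B₁·(B₁+N₁)⁻¹·N₁. -/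
/-
Put `D = B₁ + N₁`, `S = D + B₂` and `C* = B₁ D⁻¹`. Since `C* S = B₁ + C* B₂`, completing the square
in `C` gives
  `M(C) = B₁ D⁻¹ N₁ + (C - C*) (B₂ - B₂ S⁻¹ B₂) (C - C*)ᵀ`.
The middle factor is a Schur complement of the positive semidefinite block matrix
`[[B₂, B₂], [B₂, S]]`, so `M(C)` is the positive definite matrix `B₁ D⁻¹ N₁ = (B₁⁻¹ + N₁⁻¹)⁻¹` plus a
positive semidefinite one, and the determinant is monotone along such sums.
-/

open Matrix

open scoped ComplexOrder MatrixOrder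

namespace Matrix

variable {n : Type*} [Fintype n] [DecidableEq n]

section CommRing

variable {R : Type*} [CommRing R]

theorem mul_add_inv_mul_eq_inv_add_inv {A B : Matrix n n R} (hA : IsUnit A.det)
    (hB : IsUnit B.det) : A * (A + B)⁻¹ * B = (A⁻¹ + B⁻¹)⁻¹ := by
  have h : A⁻¹ + B⁻¹ = B⁻¹ * (A + B) * A⁻¹ := by
    rw [mul_add, add_mul, nonsing_inv_mul _ hB, one_mul, mul_nonsing_inv_cancel_right _ _ hA,
      add_comm]
  rw [h, Matrix.mul_inv_rev, Matrix.mul_inv_rev, nonsing_inv_nonsing_inv _ hA,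
    nonsing_inv_nonsing_inv _ hB, Matrix.mul_assoc]

theorem add_mul_mul_transpose_sub_mul_inv_mul_transpose {K E B S : Matrix n n R}
    (hB : B.IsSymm) (hS : S.IsSymm) (hSu : IsUnit S.det) :
    (K + E) * B * (K + E)ᵀ - (K * S + E * B) * S⁻¹ * (K * S + E * B)ᵀ
      = K * (B - S) * Kᵀ + E * (B - B * S⁻¹ * B) * Eᵀ := by
  simp only [transpose_add, transpose_mul, hB.eq, hS.eq, add_mul, mul_add, Matrix.mul_assoc,
    mul_nonsing_inv_cancel_left _ _ hSu, nonsing_inv_mul_cancel_left _ _ hSu, mul_sub, sub_mul]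
  abel

/-- The paper's `M(C)`: the conditional covariance of `b₁ + C b₂` given `b₁ + b₂ + n₁`. -/
noncomputable def precodingCov (B₁ B₂ N₁ C : Matrix n n R) : Matrix n n R :=
  B₁ + C * B₂ * Cᵀ - (B₁ + C * B₂) * (B₁ + B₂ + N₁)⁻¹ * (B₁ + C * B₂)ᵀ

theorem precodingCov_eq {B₁ B₂ N₁ : Matrix n n R} (hB₁ : B₁.IsSymm) (hB₂ : B₂.IsSymm)
    (hN₁ : N₁.IsSymm) (hD : IsUnit (B₁ + N₁).det) (hS : IsUnit (B₁ + N₁ + B₂).det)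
    (C : Matrix n n R) :
    precodingCov B₁ B₂ N₁ C = B₁ * (B₁ + N₁)⁻¹ * N₁
      + (C - B₁ * (B₁ + N₁)⁻¹) * (B₂ - B₂ * (B₁ + N₁ + B₂)⁻¹ * B₂)
        * (C - B₁ * (B₁ + N₁)⁻¹)ᵀ := by
  set D := B₁ + N₁ with hD_def
  set K := B₁ * D⁻¹
  have hDsymm : D.IsSymm := hB₁.add hN₁
  have hKS : K * (D + B₂) = B₁ + K * B₂ := by
    rw [mul_add, nonsing_inv_mul_cancel_right _ _ hD]
  have hsplit : B₁ + C * B₂ = K * (D + B₂) + (C - K) * B₂ := by rw [hKS, sub_mul]; abel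
  have hopt : B₁ + K * (B₂ - (D + B₂)) * Kᵀ = B₁ * D⁻¹ * N₁ := by
    rw [show B₂ - (D + B₂) = -D by abel, mul_neg, nonsing_inv_mul_cancel_right _ _ hD,
      transpose_mul, transpose_nonsing_inv, hDsymm.eq, hB₁.eq,
      show N₁ = D - B₁ by rw [hD_def]; abel, mul_sub, nonsing_inv_mul_cancel_right _ _ hD]
    noncomm_ring
  calc precodingCov B₁ B₂ N₁ C
      = B₁ + ((K + (C - K)) * B₂ * (K + (C - K))ᵀ
          - (K * (D + B₂) + (C - K) * B₂) * (D + B₂)⁻¹ * (K * (D + B₂) + (C - K) * B₂)ᵀ) := by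
        rw [add_sub_cancel, ← hsplit, precodingCov, add_right_comm B₁ B₂ N₁, ← hD_def,
          add_sub_assoc]
    _ = B₁ * D⁻¹ * N₁ + (C - K) * (B₂ - B₂ * (D + B₂)⁻¹ * B₂) * (C - K)ᵀ := by
        rw [add_mul_mul_transpose_sub_mul_inv_mul_transpose hB₂ (hDsymm.add hB₂) hS,
          ← add_assoc, hopt]

end CommRing

theorem conjTranspose_fromCols_mul_mul_fromCols {R l m k : Type*} [Fintype m] [Semiring R]
    [StarRing R] (P : Matrix m l R) (Q : Matrix m k R) (A : Matrix m m R) :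
    (fromCols P Q)ᴴ * A * fromCols P Q
      = fromBlocks (Pᴴ * A * P) (Pᴴ * A * Q) (Qᴴ * A * P) (Qᴴ * A * Q) := by
  rw [conjTranspose_fromCols_eq_fromRows_conjTranspose, fromRows_mul, fromRows_mul_fromCols]

variable {𝕜 : Type*} [RCLike 𝕜]

theorem PosDef.mul_add_inv_mul {A B : Matrix n n 𝕜} (hA : A.PosDef) (hB : B.PosDef) :
    (A * (A + B)⁻¹ * B).PosDef := by
  rw [mul_add_inv_mul_eq_inv_add_inv ((isUnit_iff_isUnit_det A).mp hA.isUnit)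
    ((isUnit_iff_isUnit_det B).mp hB.isUnit)]
  exact (hA.inv.add hB.inv).inv

theorem PosSemidef.sub_mul_add_inv_mul {B D : Matrix n n 𝕜} (hB : B.PosSemidef)
    (hD : D.PosDef) : (B - B * (D + B)⁻¹ * B).PosSemidef := by
  have hS : (D + B).PosDef := hD.add_posSemidef hB
  have hblocks : (fromBlocks B B Bᴴ (D + B)).PosSemidef := by
    have h := (hB.conjTranspose_mul_mul_same (fromCols 1 1 : Matrix n (n ⊕ n) 𝕜)).add
      (hD.posSemidef.conjTranspose_mul_mul_same (fromCols 0 1 : Matrix n (n ⊕ n) 𝕜))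
    rw [conjTranspose_fromCols_mul_mul_fromCols, conjTranspose_fromCols_mul_mul_fromCols,
      fromBlocks_add] at h
    simpa [hB.isHermitian.eq, add_comm D B] using h
  have := hS.isUnit.invertible
  simpa [hB.isHermitian.eq] using (PosDef.fromBlocks₂₂ B B hS).mp hblocks

theorem PosSemidef.one_le_det_one_add {P : Matrix n n ℝ} (hP : P.PosSemidef) :
    1 ≤ (1 + P).det := by
  have hP_sa : IsSelfAdjoint P := hP.isHermitian
  have h : 1 + P = cfc (fun x : ℝ => 1 + x) P := by
    rw [cfc_add .., cfc_const_one .., cfc_id' ..]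
  rw [h, hP.isHermitian.cfc_eq]
  simp only [IsHermitian.cfc, det_map, det_diagonal]
  exact Finset.one_le_prod fun i _ ↦ le_add_of_nonneg_right (hP.eigenvalues_nonneg i)

theorem PosDef.det_le_det_add {A W : Matrix n n ℝ} (hA : A.PosDef) (hW : W.PosSemidef) :
    A.det ≤ (A + W).det := by
  set R := CFC.sqrt A
  have hRR : R * R = A := CFC.sqrt_mul_sqrt_self A hA.posSemidef.nonneg
  have hR : IsUnit R.det := by
    refine isUnit_iff_ne_zero.mpr fun h ↦ hA.det_pos.ne' ?_
    rw [← hRR, det_mul, h, mul_zero]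
  have hRinv : R⁻¹ᴴ = R⁻¹ := by
    rw [conjTranspose_nonsing_inv, (CFC.sqrt_nonneg A).posSemidef.isHermitian.eq]
  have hX : (R⁻¹ * W * R⁻¹).PosSemidef := by
    simpa only [hRinv] using hW.mul_mul_conjTranspose_same R⁻¹
  have hsum : A + W = R * (1 + R⁻¹ * W * R⁻¹) * R := by
    rw [mul_add, add_mul, mul_one, hRR, ← Matrix.mul_assoc, nonsing_inv_mul_cancel_right _ _ hR,
      mul_nonsing_inv_cancel_left _ _ hR]
  calc A.det ≤ A.det * (1 + R⁻¹ * W * R⁻¹).det := le_mul_of_one_le_right hA.det_pos.le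
          hX.one_le_det_one_add
    _ = (A + W).det := by rw [hsum, ← hRR, det_mul, det_mul, det_mul]; ring

end Matrix

theorem stmt_14_general (t : ℕ)
    (B₁ N₁ : Matrix (Fin t) (Fin t) ℝ) (hB₁ : B₁.PosDef) (hN₁ : N₁.PosDef)
    (B₂ : Matrix (Fin t) (Fin t) ℝ) (hB₂ : B₂.PosSemidef)
    (M : Matrix (Fin t) (Fin t) ℝ → Matrix (Fin t) (Fin t) ℝ)
    (hM : ∀ C, M C = B₁ + C * B₂ * Cᵀ
        - (B₁ + C * B₂) * (B₁ + B₂ + N₁)⁻¹ * (B₁ + C * B₂)ᵀ) :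
    (∀ C : Matrix (Fin t) (Fin t) ℝ,
        B₁.det * N₁.det / (B₁ + N₁).det ≤ (M C).det) ∧
      M (B₁ * (B₁ + N₁)⁻¹) = B₁ * (B₁ + N₁)⁻¹ * N₁ ∧
      (M (B₁ * (B₁ + N₁)⁻¹)).det = B₁.det * N₁.det / (B₁ + N₁).det := by
  have hD : (B₁ + N₁).PosDef := hB₁.add hN₁
  have hS : (B₁ + N₁ + B₂).PosDef := hD.add_posSemidef hB₂
  have hsymm {A : Matrix (Fin t) (Fin t) ℝ} (hA : A.PosSemidef) : A.IsSymm :=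
    isHermitian_iff_isSymm.mp hA.isHermitian
  have hM_eq (C : Matrix (Fin t) (Fin t) ℝ) := (hM C).trans <|
    precodingCov_eq (hsymm hB₁.posSemidef) (hsymm hB₂) (hsymm hN₁.posSemidef)
      hD.det_pos.ne'.isUnit hS.det_pos.ne'.isUnit C
  have hM_opt : M (B₁ * (B₁ + N₁)⁻¹) = B₁ * (B₁ + N₁)⁻¹ * N₁ := by
    rw [hM_eq, sub_self, zero_mul, zero_mul, add_zero]
  have hdet_opt : (B₁ * (B₁ + N₁)⁻¹ * N₁).det = B₁.det * N₁.det / (B₁ + N₁).det := by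
    rw [det_mul, det_mul, det_nonsing_inv, Ring.inverse_eq_inv', div_eq_mul_inv, mul_right_comm]
  refine ⟨fun C ↦ ?_, hM_opt, by rw [hM_opt, hdet_opt]⟩
  have hexcess := (hB₂.sub_mul_add_inv_mul hD).mul_mul_conjTranspose_same (C - B₁ * (B₁ + N₁)⁻¹)
  rw [conjTranspose_eq_transpose_of_trivial] at hexcess
  rw [hM_eq, ← hdet_opt]
  exact (hB₁.mul_add_inv_mul hN₁).det_le_det_add hexcess

/-- Determinant form of the dirty-paper precoding lemma: the conditional covariance
`M(C) = B₁ + C B₂ Cᵀ - (B₁ + C B₂)(B₁+B₂+N₁)⁻¹(B₁ + C B₂)ᵀ` satisfies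
`det(M(C)) ≥ det B₁ det N₁ / det(B₁+N₁)` for every `C`, with equality for
`C* = B₁ (B₁+N₁)⁻¹`, for which `M(C*) = B₁ (B₁+N₁)⁻¹ N₁`. -/
theorem stmt_14 (t : ℕ) (ht : 1 ≤ t)
    (B₁ N₁ : Matrix (Fin t) (Fin t) ℝ) (hB₁ : B₁.PosDef) (hN₁ : N₁.PosDef)
    (B₂ : Matrix (Fin t) (Fin t) ℝ) (hB₂ : B₂.PosSemidef)
    (M : Matrix (Fin t) (Fin t) ℝ → Matrix (Fin t) (Fin t) ℝ)
    (hM : ∀ C, M C = B₁ + C * B₂ * Cᵀ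
        - (B₁ + C * B₂) * (B₁ + B₂ + N₁)⁻¹ * (B₁ + C * B₂)ᵀ) :
    (∀ C : Matrix (Fin t) (Fin t) ℝ,
        B₁.det * N₁.det / (B₁ + N₁).det ≤ (M C).det) ∧
      M (B₁ * (B₁ + N₁)⁻¹) = B₁ * (B₁ + N₁)⁻¹ * N₁ ∧
      (M (B₁ * (B₁ + N₁)⁻¹)).det = B₁.det * N₁.det / (B₁ + N₁).det :=
  stmt_14_general t B₁ N₁ hB₁ hN₁ B₂ hB₂ M hM
end
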